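/- Let A = ⟨X, Y, ⊏⟩ be a relational system and θ a regular cardinal. If D ⊆ Y is a strongly θ-A-dominating family, then D is |D|-A-dominating; consequently 𝔡(A) ≤ |D| ≤ 𝔟(A). -/

import Mathlib

universe u

open Cardinal

/-- `D` is an `A`-dominating family for the relational system given by `r`. -/
def RelDominating {X Y : Type u} (r : X → Y → Prop) (D : Set Y) : Prop :=
  ∀ x : X, ∃ y ∈ D, r x y

/-- `D` is a `λ`-`A`-dominating family. -/
def RelThetaDominating {X Y : Type u} (r : X → Y → Prop) (θ : Cardinal) (D : Set Y) : Prop :=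
  ∀ E : Set X, #E < θ → ∃ y ∈ D, ∀ x ∈ E, r x y

/-- `D` is a strongly `θ`-`A`-dominating family: `|D| ≥ θ` and for every `x`,
fewer than `θ` many members of `D` fail to dominate `x`. -/
def RelStronglyDominating {X Y : Type u} (r : X → Y → Prop) (θ : Cardinal) (D : Set Y) : Prop :=
  θ ≤ #D ∧ ∀ x : X, #{y : Y // y ∈ D ∧ ¬ r x y} < θ

/-- `F` is an `A`-unbounded family. -/
def RelUnbounded {X Y : Type u} (r : X → Y → Prop) (F : Set X) : Prop :=
  ¬ ∃ y : Y, ∀ x ∈ F, r x y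

/-- `𝔡(A)`: the least size of an `A`-dominating family. -/
noncomputable def dNum {X Y : Type u} (r : X → Y → Prop) : Cardinal :=
  sInf {c | ∃ D : Set Y, RelDominating r D ∧ #D = c}

/-- `𝔟(A)`: the least size of an `A`-unbounded family. -/
noncomputable def bNum {X Y : Type u} (r : X → Y → Prop) : Cardinal :=
  sInf {c | ∃ F : Set X, RelUnbounded r F ∧ #F = c}

/-- Below `θ` many sets of size `< θ` have a union of size `< θ` by regularity; at least `θ` many
have a union of size at most `#ι * θ = #ι`. -/
theorem Cardinal.mk_iUnion_lt_of_isRegular {α ι : Type u} {θ μ : Cardinal} (hθ : θ.IsRegular)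
    (hθμ : θ ≤ μ) (hι : #ι < μ) {t : ι → Set α} (ht : ∀ i, #(t i) < θ) : #(⋃ i, t i) < μ := by
  rcases lt_or_ge #ι θ with hιθ | hθι
  · exact ((card_iUnion_lt_iff_forall_of_isRegular hθ hιθ).2 ht).trans_le hθμ
  · calc #(⋃ i, t i) ≤ sum fun i => #(t i) := mk_iUnion_le_sum_mk
      _ ≤ sum fun _ : ι => θ := sum_le_sum _ _ fun i => (ht i).le
      _ = #ι * θ := by rw [sum_const']
      _ = #ι := mul_eq_left (hθ.aleph0_le.trans hθι) hθι hθ.pos.ne'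
      _ < μ := hι

section RelationalSystem

variable {X Y : Type u} {r : X → Y → Prop} {θ : Cardinal} {D : Set Y}

/-- The members of `D` failing to dominate some element of `E` are fewer than `#D`, so some
member of `D` dominates all of `E`. -/
theorem RelStronglyDominating.relThetaDominating_mk (hθ : θ.IsRegular)
    (hD : RelStronglyDominating r θ D) : RelThetaDominating r #D D := by
  intro E hE
  have hbad : #(⋃ x : E, {y | y ∈ D ∧ ¬ r x y}) < #D :=
    mk_iUnion_lt_of_isRegular hθ hD.1 hE fun x => hD.2 x
  obtain ⟨y, hyD, hy⟩ := Set.not_subset.1 fun h => (mk_le_mk_of_subset h).not_gt hbad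
  refine ⟨y, hyD, fun x hx => ?_⟩
  by_contra hxy
  exact hy (Set.mem_iUnion.2 ⟨⟨x, hx⟩, hyD, hxy⟩)

theorem RelThetaDominating.relDominating (hD : RelThetaDominating r θ D) (hθ : 1 < θ) :
    RelDominating r D := by
  intro x
  obtain ⟨y, hyD, hy⟩ := hD {x} (by rwa [mk_singleton])
  exact ⟨y, hyD, hy x rfl⟩

theorem RelThetaDominating.le_bNum (hD : RelThetaDominating r θ D)
    (hb : ∃ F : Set X, RelUnbounded r F) : θ ≤ bNum r := by
  obtain ⟨F₀, hF₀⟩ := hb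
  obtain ⟨F, hF, hFc⟩ := csInf_mem (s := {c | ∃ F : Set X, RelUnbounded r F ∧ #F = c})
    ⟨#F₀, F₀, hF₀, rfl⟩
  rw [bNum, ← hFc]
  by_contra! hlt
  obtain ⟨y, -, hy⟩ := hD F hlt
  exact hF ⟨y, hy⟩

theorem dNum_le_of_relDominating (hD : RelDominating r D) : dNum r ≤ #D :=
  csInf_le (OrderBot.bddBelow _) ⟨D, hD, rfl⟩

end RelationalSystem

theorem stronglyDominating_dominating_general {X Y : Type u} (r : X → Y → Prop)
    (θ : Cardinal) (hθ : θ.IsRegular) (D : Set Y) (hD : RelStronglyDominating r θ D)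
    (hb : ∃ F : Set X, RelUnbounded r F) :
    RelThetaDominating r (#D) D ∧ dNum r ≤ #D ∧ #D ≤ bNum r := by
  have hdom := hD.relThetaDominating_mk hθ
  have hD1 : 1 < #D := one_lt_aleph0.trans_le (hθ.aleph0_le.trans hD.1)
  exact ⟨hdom, dNum_le_of_relDominating (hdom.relDominating hD1), hdom.le_bNum hb⟩

theorem stronglyDominating_dominating {X Y : Type u} (r : X → Y → Prop)
    (θ : Cardinal) (hθ : θ.IsRegular) (D : Set Y) (hD : RelStronglyDominating r θ D)
    (hb : ∃ F : Set X, RelUnbounded r F) (hd : ∃ D' : Set Y, RelDominating r D') :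
    RelThetaDominating r (#D) D ∧ dNum r ≤ #D ∧ #D ≤ bNum r :=
  stronglyDominating_dominating_general r θ hθ D hD hb
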